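/- arXiv:1503.06127 — 2 statements merged into one kernel-verified Lean document; each statement's English description precedes it below -/
import Mathlib

section
/- The multiplication map μ₀ on the disjoint union ⨆_{n∈ℕ} B(n), defined on B(n) ⊗ B(m) by projecting the Clebsch–Gordan decomposition onto the top component B(n+m), is given explicitly by μ₀(x^i y^j ⊗ x^r y^s) = x^{i+r} y^s if j = 0, x^i y^{j+s} if r = 0, and 0 if j ≠ 0 ≠ r; moreover this gives an associative multiplication with unit x^0 y^0, agreeing with the monomial multiplication in k⟨x,y⟩/(xy). -/
/-- `x^i y^j` is represented as `(i, j) : ℕ × ℕ`, an element of the sl2-crystal `B(i+j)`. -/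
def et (p : ℕ × ℕ) : Option (ℕ × ℕ) := if p.1 = 0 then none else some (p.1 - 1, p.2 + 1)
def ft (p : ℕ × ℕ) : Option (ℕ × ℕ) := if p.2 = 0 then none else some (p.1 + 1, p.2 - 1)
def eps (p : ℕ × ℕ) : ℤ := p.1
def phi (p : ℕ × ℕ) : ℤ := p.2
def wt (p : ℕ × ℕ) : ℤ := (p.2 : ℤ) - (p.1 : ℤ)

/-- Kashiwara tensor product rule for `ẽ` on a pair of elements. -/
def etT (b : (ℕ × ℕ) × (ℕ × ℕ)) : Option ((ℕ × ℕ) × (ℕ × ℕ)) :=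
  if eps b.2 ≤ phi b.1 then (et b.1).map (fun a => (a, b.2)) else (et b.2).map (fun a => (b.1, a))

/-- Kashiwara tensor product rule for `f̃` on a pair of elements. -/
def ftT (b : (ℕ × ℕ) × (ℕ × ℕ)) : Option ((ℕ × ℕ) × (ℕ × ℕ)) :=
  if eps b.2 < phi b.1 then (ft b.1).map (fun a => (a, b.2)) else (ft b.2).map (fun a => (b.1, a))

def epsT (b : (ℕ × ℕ) × (ℕ × ℕ)) : ℤ := max (eps b.1) (eps b.2 - wt b.1)
def phiT (b : (ℕ × ℕ) × (ℕ × ℕ)) : ℤ := max (phi b.1 + wt b.2) (phi b.2)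
def wtT (b : (ℕ × ℕ) × (ℕ × ℕ)) : ℤ := wt b.1 + wt b.2

/-- Iterated application of a pointed (partial) operator. -/
def iterOp {α : Type} (g : α → Option α) : ℕ → α → Option α
  | 0, a => some a
  | n + 1, a => (g a).bind (iterOp g n)

/-- The underlying set of the sl2-crystal `B(n)`: monomials `x^i y^j` with `i + j = n`. -/
def Bel (n : ℕ) : Type := {p : ℕ × ℕ // p.1 + p.2 = n}

def etB {n : ℕ} (b : Bel n) : Option (Bel n) :=
  if h : b.val.1 = 0 then none
  else some ⟨(b.val.1 - 1, b.val.2 + 1), by have := b.2; omega⟩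

def ftB {n : ℕ} (b : Bel n) : Option (Bel n) :=
  if h : b.val.2 = 0 then none
  else some ⟨(b.val.1 + 1, b.val.2 - 1), by have := b.2; omega⟩

/-- The multiplication `μ₀` on `⨆_{n∈ℕ} B(n)` (elements `x^i y^j`, with `B(n) ⊗ B(m)`
projected onto the top Clebsch–Gordan component `B(n+m)`), given by its explicit formula. -/
def mu0 (x : (ℕ × ℕ) × (ℕ × ℕ)) : Option (ℕ × ℕ) :=
  if x.1.2 = 0 then some (x.1.1 + x.2.1, x.2.2)
  else if x.2.1 = 0 then some (x.1.1, x.1.2 + x.2.2)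
  else none

/-! The `f̃`-string through the highest weight element `y^n ⊗ y^m` first lowers the left
factor all the way, `x^t y^(n-t) ⊗ y^m` for `t ≤ n` (the signature rule acts on the left as long
as `ε(y^m) = 0 < φ`), and then the right factor, `x^n ⊗ x^(t-n) y^(n+m-t)`. So the top
Clebsch–Gordan component is exactly `{x^i y^j ⊗ x^r y^s | j = 0 ∨ r = 0}`, its `t`-th element
corresponds to `x^t y^(n+m-t) ∈ B(n+m)`, and this is what the formula for `μ₀` computes.
Unit and associativity laws are a case check on which exponents vanish. -/

lemma iterOp_succ_eq_bind {α : Type} (g : α → Option α) (t : ℕ) (a : α) :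
    iterOp g (t + 1) a = (iterOp g t a).bind g := by
  induction t generalizing a with
  | zero => simp [iterOp]
  | succ t ih =>
    change (g a).bind (iterOp g (t + 1)) = ((g a).bind (iterOp g t)).bind g
    cases g a with
    | none => rfl
    | some b => exact ih b

lemma ft_of_ne_zero {i j : ℕ} (hj : j ≠ 0) : ft (i, j) = some (i + 1, j - 1) := if_neg hj

lemma ft_zero (i : ℕ) : ft (i, 0) = none := if_pos rfl

lemma ftT_of_eps_lt_phi {b : (ℕ × ℕ) × (ℕ × ℕ)} (h : eps b.2 < phi b.1) :
    ftT b = (ft b.1).map (fun a => (a, b.2)) := if_pos h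

lemma ftT_of_phi_le_eps {b : (ℕ × ℕ) × (ℕ × ℕ)} (h : phi b.1 ≤ eps b.2) :
    ftT b = (ft b.2).map (fun a => (b.1, a)) := if_neg h.not_gt

lemma mu0_xPow_mul (i r s : ℕ) : mu0 ((i, 0), (r, s)) = some (i + r, s) := rfl

lemma mu0_mul_yPow (i j s : ℕ) : mu0 ((i, j), (0, s)) = some (i, j + s) := by
  by_cases hj : j = 0 <;> simp [mu0, hj]

lemma mu0_eq_none {i j r s : ℕ} (hj : j ≠ 0) (hr : r ≠ 0) : mu0 ((i, j), (r, s)) = none := by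
  simp [mu0, hj, hr]

lemma mu0_assoc (a b c : ℕ × ℕ) :
    (mu0 (a, b)).bind (fun p => mu0 (p, c)) = (mu0 (b, c)).bind (fun p => mu0 (a, p)) := by
  obtain ⟨i, j⟩ := a
  obtain ⟨r, s⟩ := b
  obtain ⟨u, v⟩ := c
  by_cases hj : j = 0 <;> by_cases hr : r = 0 <;> by_cases hs : s = 0 <;> by_cases hu : u = 0 <;>
    simp [mu0, hj, hr, hs, hu, Prod.ext_iff] <;> omega

/-- The element `f̃^t (y^n ⊗ y^m)` of the top component of `B(n) ⊗ B(m)`. -/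
def topString (n m t : ℕ) : (ℕ × ℕ) × (ℕ × ℕ) :=
  if t ≤ n then ((t, n - t), (0, m)) else ((n, 0), (t - n, n + m - t))

lemma topString_of_le_left {n m t : ℕ} (h : t ≤ n) : topString n m t = ((t, n - t), (0, m)) :=
  if_pos h

lemma topString_of_left_le {n m t : ℕ} (h : n ≤ t) :
    topString n m t = ((n, 0), (t - n, n + m - t)) := by
  unfold topString
  split_ifs with htn
  · obtain rfl : t = n := by omega
    simp
  · rfl

lemma ftT_topString {n m t : ℕ} (ht : t < n + m) :
    ftT (topString n m t) = some (topString n m (t + 1)) := by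
  by_cases htn : t < n
  · rw [topString_of_le_left htn.le, topString_of_le_left htn,
      ftT_of_eps_lt_phi (by simp only [eps, phi]; omega), ft_of_ne_zero (by omega)]
    simp only [Option.map_some, Nat.sub_sub]
  · rw [topString_of_left_le (not_lt.mp htn), topString_of_left_le (by omega),
      ftT_of_phi_le_eps (by simp only [eps, phi]; omega), ft_of_ne_zero (by omega)]
    simp only [Option.map_some, Option.some.injEq, Prod.mk.injEq, true_and]
    omega

lemma ftT_topString_self_add (n m : ℕ) : ftT (topString n m (n + m)) = none := by
  rw [topString_of_left_le (by omega), ftT_of_phi_le_eps (by simp only [eps, phi]; omega),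
    Nat.sub_self, ft_zero, Option.map_none]

lemma iterOp_ftT_highestWeight (n m t : ℕ) :
    iterOp ftT t ((0, n), (0, m)) = if t ≤ n + m then some (topString n m t) else none := by
  induction t with
  | zero => simp [iterOp, topString]
  | succ t ih =>
    rw [iterOp_succ_eq_bind, ih]
    rcases lt_trichotomy t (n + m) with ht | rfl | ht
    · simp [ht.le, Nat.succ_le_of_lt ht, ftT_topString ht]
    · simp [ftT_topString_self_add]
    · simp [ht.not_ge, show ¬ t + 1 ≤ n + m by omega]

lemma mu0_topString {n m t : ℕ} (ht : t ≤ n + m) :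
    mu0 (topString n m t) = some (t, n + m - t) := by
  rcases le_total t n with htn | htn
  · rw [topString_of_le_left htn, mu0_mul_yPow]
    congr 2
    omega
  · rw [topString_of_left_le htn, mu0_xPow_mul]
    congr 2
    omega

lemma exists_topString_eq_of_mu0_ne_none {b : (ℕ × ℕ) × (ℕ × ℕ)} (h : mu0 b ≠ none) :
    ∃ t ≤ b.1.1 + b.1.2 + (b.2.1 + b.2.2), topString (b.1.1 + b.1.2) (b.2.1 + b.2.2) t = b := by
  obtain ⟨⟨i, j⟩, ⟨r, s⟩⟩ := b
  dsimp only
  by_cases hj : j = 0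
  · subst hj
    refine ⟨i + r, by omega, ?_⟩
    rw [topString_of_left_le (by omega)]
    congr 2 <;> omega
  · obtain rfl : r = 0 := by_contra fun hr => h (mu0_eq_none hj hr)
    refine ⟨i, by omega, ?_⟩
    rw [topString_of_le_left (by omega)]
    congr 2 <;> omega

/-- `μ₀` is given explicitly by
`μ₀(x^i y^j ⊗ x^r y^s) = x^{i+r} y^s` if `j = 0`, `x^i y^{j+s}` if `r = 0`, and `0`
otherwise; it is exactly the projection onto the top Clebsch–Gordan component `B(n+m)`
(the connected component of the highest weight element `y^n ⊗ y^m`, on which it is the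
crystal identification with `B(n+m)`, vanishing off this component); and it is an
associative multiplication with unit `x^0 y^0`, agreeing with the multiplication of monic
monomials in `k⟨x,y⟩/(xy)`. -/
theorem stmt5 :
    (∀ i r s : ℕ, mu0 ((i, 0), (r, s)) = some (i + r, s)) ∧
    (∀ i j s : ℕ, mu0 ((i, j), (0, s)) = some (i, j + s)) ∧
    (∀ i j r s : ℕ, j ≠ 0 → r ≠ 0 → mu0 ((i, j), (r, s)) = none) ∧
    (∀ n m t : ℕ, t ≤ n + m → ∃ b, iterOp ftT t ((0, n), (0, m)) = some b ∧
        mu0 b = some (t, n + m - t)) ∧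
    (∀ b : (ℕ × ℕ) × (ℕ × ℕ),
        (∀ t : ℕ, iterOp ftT t ((0, b.1.1 + b.1.2), (0, b.2.1 + b.2.2)) ≠ some b) →
        mu0 b = none) ∧
    (∀ b : ℕ × ℕ, mu0 ((0, 0), b) = some b ∧ mu0 (b, (0, 0)) = some b) ∧
    (∀ a b c : ℕ × ℕ,
        (mu0 (a, b)).bind (fun p => mu0 (p, c)) =
        (mu0 (b, c)).bind (fun p => mu0 (a, p))) := by
  refine ⟨mu0_xPow_mul, mu0_mul_yPow, fun i j r s => mu0_eq_none,
    fun n m t ht => ⟨_, by rw [iterOp_ftT_highestWeight, if_pos ht], mu0_topString ht⟩,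
    fun b hb => ?_, fun ⟨i, j⟩ => ⟨?_, ?_⟩, mu0_assoc⟩
  · by_contra h
    obtain ⟨t, ht, hbt⟩ := exists_topString_eq_of_mu0_ne_none h
    apply hb t
    rw [iterOp_ftT_highestWeight, if_pos ht, hbt]
  · simpa using mu0_xPow_mul 0 i j
  · simpa using mu0_mul_yPow i j 0
end

section
/- The Henriques–Kamnitzer crystal commutor σ : B(n) ⊗ B(m) → B(m) ⊗ B(n), defined by σ(b ⊗ b') = ζ(ζ(b') ⊗ ζ(b)) where ζ reverses the crystal graph of each connected component, is given explicitly on x^i y^j ⊗ x^r y^s (i+j = n, r+s = m) by: x^{i+r−j} y^{s+j−i} ⊗ x^j y^i if j ≤ r and i ≤ s; x^{s+r−j} y^j ⊗ x^{i+j−s} y^s if j ≤ r and i > s; x^i y^{r+s−i} ⊗ x^r y^{i+j−r} if j > r and i ≤ s; x^s y^r ⊗ x^{i+r−s} y^{j+s−r} if j > r and i > s. -/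
/-- `ζ` on a tensor product of sl2 crystals: reverse each connected component of the
crystal graph (go up `ε` steps to the highest weight element, then down `φ` steps). -/
def zetaT (b : (ℕ × ℕ) × (ℕ × ℕ)) : Option ((ℕ × ℕ) × (ℕ × ℕ)) :=
  (iterOp etT (epsT b).toNat b).bind (iterOp ftT (phiT b).toNat)

/-- The Henriques–Kamnitzer commutor `σ(b ⊗ b') = ζ(ζ(b') ⊗ ζ(b))`, where on a single
`B(n)` one has `ζ(x^a y^b) = x^b y^a`. -/
def sigmaHK (b : (ℕ × ℕ) × (ℕ × ℕ)) : Option ((ℕ × ℕ) × (ℕ × ℕ)) :=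
  zetaT ((b.2.2, b.2.1), (b.1.2, b.1.1))

lemma iterOp_add {α : Type} (g : α → Option α) (m n : ℕ) (a : α) :
    iterOp g (m + n) a = (iterOp g m a).bind (iterOp g n) := by
  induction m generalizing a with
  | zero => simp [iterOp]
  | succ m ih =>
    have h : m + 1 + n = (m + n) + 1 := by omega
    rw [h]
    show (g a).bind (iterOp g (m + n)) = ((g a).bind (iterOp g m)).bind (iterOp g n)
    rw [Option.bind_assoc]
    exact congrArg _ (funext fun x => ih x)

lemma e_first (k : ℕ) : ∀ a b c d : ℕ, k ≤ a → c ≤ b →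
    iterOp etT k ((a, b), (c, d)) = some ((a - k, b + k), (c, d)) := by
  induction k with
  | zero => intro a b c d _ _; simp [iterOp]
  | succ k ih =>
    intro a b c d h1 h2
    show (etT ((a, b), (c, d))).bind (iterOp etT k) = _
    have ha : a ≠ 0 := by omega
    have h2' : ((c:ℤ)) ≤ ((b:ℤ)) := by exact_mod_cast h2
    rw [etT]
    simp only [eps, phi, et, if_pos h2', if_neg ha, Option.map_some, Option.bind_some]
    rw [ih (a - 1) (b + 1) c d (by omega) (by omega)]
    simp only [Option.some.injEq, Prod.mk.injEq, and_true, true_and]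
    omega

lemma e_second (k : ℕ) : ∀ a b c d : ℕ, b + k ≤ c →
    iterOp etT k ((a, b), (c, d)) = some ((a, b), (c - k, d + k)) := by
  induction k with
  | zero => intro a b c d _; simp [iterOp]
  | succ k ih =>
    intro a b c d h
    show (etT ((a, b), (c, d))).bind (iterOp etT k) = _
    have hc : ¬ ((c : ℤ) ≤ (b : ℤ)) := by omega
    have hc0 : c ≠ 0 := by omega
    rw [etT]
    simp only [eps, phi, if_neg hc, et, if_neg hc0, Option.map_some, Option.bind_some]
    rw [ih a b (c - 1) (d + 1) (by omega)]
    simp only [Option.some.injEq, Prod.mk.injEq, and_true, true_and]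
    omega

lemma f_first (k : ℕ) : ∀ a b c d : ℕ, c + k ≤ b →
    iterOp ftT k ((a, b), (c, d)) = some ((a + k, b - k), (c, d)) := by
  induction k with
  | zero => intro a b c d _; simp [iterOp]
  | succ k ih =>
    intro a b c d h
    show (ftT ((a, b), (c, d))).bind (iterOp ftT k) = _
    have hc : (c : ℤ) < (b : ℤ) := by omega
    have hb : b ≠ 0 := by omega
    rw [ftT]
    simp only [eps, phi, if_pos hc, ft, if_neg hb, Option.map_some, Option.bind_some]
    rw [ih (a + 1) (b - 1) c d (by omega)]
    simp only [Option.some.injEq, Prod.mk.injEq, and_true, true_and]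
    omega

lemma f_second (k : ℕ) : ∀ a b c d : ℕ, b ≤ c → k ≤ d →
    iterOp ftT k ((a, b), (c, d)) = some ((a, b), (c + k, d - k)) := by
  induction k with
  | zero => intro a b c d _ _; simp [iterOp]
  | succ k ih =>
    intro a b c d h1 h2
    show (ftT ((a, b), (c, d))).bind (iterOp ftT k) = _
    have hc : ¬ ((c : ℤ) < (b : ℤ)) := by omega
    have hd : d ≠ 0 := by omega
    rw [ftT]
    simp only [eps, phi, if_neg hc, ft, if_neg hd, Option.map_some, Option.bind_some]
    rw [ih a b (c + 1) (d - 1) (by omega) (by omega)]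
    simp only [Option.some.injEq, Prod.mk.injEq, and_true, true_and]
    omega

/-- The crystal commutor `σ : B(n) ⊗ B(m) → B(m) ⊗ B(n)` is given
explicitly on `x^i y^j ⊗ x^r y^s` by the stated four-case formula. -/
theorem stmt6 (i j r s : ℕ) :
    sigmaHK ((i, j), (r, s)) =
      if j ≤ r ∧ i ≤ s then some ((i + r - j, s + j - i), (j, i))
      else if j ≤ r ∧ s < i then some ((s + r - j, j), (i + j - s, s))
      else if r < j ∧ i ≤ s then some ((i, r + s - i), (r, i + j - r))
      else some ((s, r), (i + r - s, j + s - r)) := by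
  have key : sigmaHK ((i, j), (r, s)) = zetaT ((s, r), (j, i)) := rfl
  rw [key, zetaT]
  rcases le_or_gt j r with hjr | hjr
  · -- epsT.toNat = s, phiT.toNat = r + i - j
    have hE : (epsT ((s, r), (j, i))).toNat = s := by
      simp only [epsT, eps, wt]; omega
    have hP : (phiT ((s, r), (j, i))).toNat = r + i - j := by
      simp only [phiT, phi, wt]; omega
    rw [hE, hP, e_first s s r j i le_rfl hjr]
    simp only [Nat.sub_self, Option.bind_some]
    rcases le_or_gt i s with his | his
    · rw [f_first (r + i - j) 0 (r + s) j i (by omega)]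
      rw [if_pos ⟨hjr, his⟩]
      simp only [Option.some.injEq, Prod.mk.injEq, and_true, true_and]
      omega
    · have hsplit : r + i - j = (r + s - j) + (i - s) := by omega
      rw [hsplit, iterOp_add, f_first (r + s - j) 0 (r + s) j i (by omega),
        Option.bind_some, f_second (i - s) (0 + (r + s - j)) (r + s - (r + s - j)) j i
          (by omega) (by omega)]
      rw [if_neg (by omega), if_pos ⟨hjr, his⟩]
      simp only [Option.some.injEq, Prod.mk.injEq, and_true, true_and]
      omega
  · -- epsT.toNat = (j - r) + s, phiT.toNat = i
    have hE : (epsT ((s, r), (j, i))).toNat = (j - r) + s := by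
      simp only [epsT, eps, wt]; omega
    have hP : (phiT ((s, r), (j, i))).toNat = i := by
      simp only [phiT, phi, wt]; omega
    rw [hE, hP, iterOp_add, e_second (j - r) s r j i (by omega), Option.bind_some,
      e_first s s r (j - (j - r)) (i + (j - r)) le_rfl (by omega)]
    simp only [Nat.sub_self, Option.bind_some]
    rcases le_or_gt i s with his | his
    · rw [f_first i 0 (r + s) (j - (j - r)) (i + (j - r)) (by omega)]
      rw [if_neg (by omega), if_neg (by omega), if_pos ⟨hjr, his⟩]
      simp only [Option.some.injEq, Prod.mk.injEq, and_true, true_and]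
      omega
    · have hsplit : i = s + (i - s) := by omega
      rw [hsplit, iterOp_add,
        f_first s 0 (r + s) (j - (j - r)) (s + (i - s) + (j - r)) (by omega),
        Option.bind_some,
        f_second (i - s) (0 + s) (r + s - s) (j - (j - r)) (s + (i - s) + (j - r))
          (by omega) (by omega)]
      rw [if_neg (by omega), if_neg (by omega), if_neg (by omega)]
      simp only [Option.some.injEq, Prod.mk.injEq, and_true, true_and]
      omega
end
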